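/- A polyhedron P ⊆ ℝ^n is a box of reals (i.e., P = {x ∈ ℝ^n : a_i ≤ x_i ≤ b_i for all i} for some a ∈ (ℝ ∪ {−∞})^n and b ∈ (ℝ ∪ {+∞})^n with a ≤ b) if and only if P is both L₂♮-convex and a multimodular polyhedron. -/

import Mathlib

open Pointwise

/-- A polyhedron in `ℝⁿ` is the solution set of a finite system of linear
inequalities. -/
def IsPolyhedron {n : ℕ} (P : Set (Fin n → ℝ)) : Prop :=
  ∃ (m : ℕ) (A : Fin m → Fin n → ℝ) (b : Fin m → ℝ),
    P = {x | ∀ i, ∑ j, A i j * x j ≤ b i}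

/-- A nonempty polyhedron `P ⊆ ℝⁿ` is L-convex if it is closed under
componentwise max/min and under translation by real multiples of `𝟏`. -/
def IsLConvexPoly {n : ℕ} (P : Set (Fin n → ℝ)) : Prop :=
  IsPolyhedron P ∧ P.Nonempty ∧
  (∀ x ∈ P, ∀ y ∈ P, x ⊔ y ∈ P ∧ x ⊓ y ∈ P) ∧
  (∀ x ∈ P, ∀ μ : ℝ, (x + fun _ => μ) ∈ P)

/-- A polyhedron `P ⊆ ℝⁿ` is L♮-convex if it is the intersection of an
L-convex polyhedron `Q ⊆ ℝ^{n+1}` with the hyperplane "last coordinate 0". -/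
def IsLNatConvexPoly {n : ℕ} (P : Set (Fin n → ℝ)) : Prop :=
  IsPolyhedron P ∧
  ∃ Q : Set (Fin (n + 1) → ℝ), IsLConvexPoly Q ∧
    P = {x : Fin n → ℝ | Fin.snoc x (0 : ℝ) ∈ Q}

/-- A polyhedron is L₂♮-convex if it is the Minkowski sum of two L♮-convex
polyhedra. -/
def IsL2NatConvexPoly {n : ℕ} (P : Set (Fin n → ℝ)) : Prop :=
  IsPolyhedron P ∧
  ∃ P₁ P₂ : Set (Fin n → ℝ), IsLNatConvexPoly P₁ ∧ IsLNatConvexPoly P₂ ∧ P = P₁ + P₂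

/-- The bidiagonal matrix `D` with `d_{ii} = 1` and `d_{i+1,i} = -1`. -/
def matD (n : ℕ) : Matrix (Fin n) (Fin n) ℝ :=
  Matrix.of fun i j => if i = j then 1 else if (i : ℕ) = (j : ℕ) + 1 then -1 else 0

/-- A polyhedron is multimodular if it is the image of an L♮-convex polyhedron
under the matrix `D`. -/
def IsMultimodularPoly {n : ℕ} (P : Set (Fin n → ℝ)) : Prop :=
  ∃ Q : Set (Fin n → ℝ), IsLNatConvexPoly Q ∧ P = (matD n).mulVec '' Q

/-- `P ⊆ ℝⁿ` is a box of reals: `P = {x : a_i ≤ x_i ≤ b_i}` for some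
`a ∈ (ℝ ∪ {-∞})ⁿ` and `b ∈ (ℝ ∪ {+∞})ⁿ` with `a ≤ b`. -/
def IsRealBox {n : ℕ} (P : Set (Fin n → ℝ)) : Prop :=
  ∃ a b : Fin n → EReal,
    (∀ i, a i ≠ ⊤) ∧ (∀ i, b i ≠ ⊥) ∧ (∀ i, a i ≤ b i) ∧
    P = {x : Fin n → ℝ | ∀ i, a i ≤ (x i : EReal) ∧ (x i : EReal) ≤ b i}

/-! A box is L♮-convex: it is the slice `z_{n+1} = 0` of the L-convex set cut out by the
difference constraints `a_i ≤ z_i - z_{n+1} ≤ b_i`; adding `{0}` makes it L₂♮-convex. Its preimage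
under `D` is the slice of the L-convex set cut out by `a_i ≤ z_i - z_{i-1} ≤ b_i` (with
`z_0 := z_{n+1}`), so the box is multimodular as well.

Conversely let `P = P₁ + P₂ = D Q`. As `P₁, P₂` are lattices, `P` is directed upwards and
downwards, so for every `x` in the coordinatewise hull of `P` and every `ε > 0` some point of `P`
lies above `x - ε` and some below `x + ε`. Taking partial sums (`D⁻¹`), `y = D⁻¹ x` then satisfies,
up to any `δ > 0`, every inequality `y_i ≤ β`, `α ≤ y_i`, `y_t - y_i ≤ γ` valid on `Q`. An
L♮-convex polyhedron is closed and translation submodular, and such a set contains every such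
point: from the approximate witnesses one assembles, by joins and meets of translates, points of `Q`
arbitrarily close to `y`. Hence `y ∈ Q` and `x = D y ∈ P`.
-/

open Set Matrix

section Polyhedra

variable {n : ℕ}

lemma isPolyhedron_setOf_le (g : (Fin n → ℝ) →ₗ[ℝ] ℝ) (β : ℝ) : IsPolyhedron {x | g x ≤ β} :=
  ⟨1, fun _ j => g fun k => if j = k then 1 else 0, fun _ => β, by
    ext x
    simp [g.pi_apply_eq_sum_univ x, mul_comm]⟩

lemma IsPolyhedron.iInter {ι : Type*} [Finite ι] {P : ι → Set (Fin n → ℝ)}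
    (h : ∀ i, IsPolyhedron (P i)) : IsPolyhedron (⋂ i, P i) := by
  choose m A b hP using h
  have : Fintype ι := Fintype.ofFinite ι
  let e := Fintype.equivFin (Σ i, Fin (m i))
  refine ⟨_, fun k => A (e.symm k).1 (e.symm k).2, fun k => b (e.symm k).1 (e.symm k).2, ?_⟩
  ext x
  simp only [mem_iInter, hP, mem_ofPred_eq]
  exact Sigma.forall.symm.trans
    (e.forall_congr_left (p := fun s => ∑ j, A s.1 s.2 j * x j ≤ b s.1 s.2))

lemma IsPolyhedron.inter {P Q : Set (Fin n → ℝ)} (hP : IsPolyhedron P) (hQ : IsPolyhedron Q) :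
    IsPolyhedron (P ∩ Q) := by
  rw [inter_eq_iInter]
  exact .iInter (Bool.rec hQ hP)

lemma IsPolyhedron.preimage {N : ℕ} {P : Set (Fin N → ℝ)} (hP : IsPolyhedron P)
    (f : (Fin n → ℝ) →ₗ[ℝ] (Fin N → ℝ)) : IsPolyhedron (f ⁻¹' P) := by
  obtain ⟨m, A, b, rfl⟩ := hP
  have : f ⁻¹' {x | ∀ i, ∑ j, A i j * x j ≤ b i} =
      ⋂ i, {x | ((∑ j, A i j • LinearMap.proj j) ∘ₗ f) x ≤ b i} := by
    ext x
    simp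
  exact this ▸ .iInter fun i => isPolyhedron_setOf_le _ _

lemma isPolyhedron_setOf_le_coe (g : (Fin n → ℝ) →ₗ[ℝ] ℝ) (a : EReal) :
    IsPolyhedron {x | a ≤ (g x : EReal)} := by
  induction a using EReal.rec with
  | bot => simpa using isPolyhedron_setOf_le 0 0
  | coe r => simpa using isPolyhedron_setOf_le (-g) (-r)
  | top => simpa [not_le.2 zero_lt_one] using isPolyhedron_setOf_le 0 (-1)

lemma isPolyhedron_setOf_coe_le (g : (Fin n → ℝ) →ₗ[ℝ] ℝ) (b : EReal) :
    IsPolyhedron {x | (g x : EReal) ≤ b} := by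
  simpa using isPolyhedron_setOf_le_coe (-g) (-b)

lemma isPolyhedron_setOf_forall_mem_Icc {ι : Type*} [Finite ι]
    (g : ι → (Fin n → ℝ) →ₗ[ℝ] ℝ) (a b : ι → EReal) :
    IsPolyhedron {x | ∀ i, (g i x : EReal) ∈ Icc (a i) (b i)} := by
  simp only [mem_Icc, ofPred_forall, ofPred_and]
  exact .iInter fun i => (isPolyhedron_setOf_le_coe _ _).inter (isPolyhedron_setOf_coe_le _ _)

lemma IsPolyhedron.isClosed {P : Set (Fin n → ℝ)} (hP : IsPolyhedron P) : IsClosed P := by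
  obtain ⟨m, A, b, rfl⟩ := hP
  simp only [ofPred_forall]
  exact isClosed_iInter fun i => isClosed_le (by fun_prop) continuous_const

end Polyhedra

section Approximation

lemma exists_forall_of_improve {α ι : Type*} [Finite ι] {R : α → Prop} {C : α → ι → Prop}
    (h₀ : ∃ a, R a) (h : ∀ a, R a → ∀ i, ∃ b, R b ∧ C b i ∧ ∀ j, C a j → C b j) :
    ∃ a, R a ∧ ∀ i, C a i := by
  classical
  have : Fintype ι := Fintype.ofFinite ι
  suffices ∀ s : Finset ι, ∃ a, R a ∧ ∀ i ∈ s, C a i by simpa using this Finset.univ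
  intro s
  induction s using Finset.induction_on with
  | empty => simpa using h₀
  | insert i s _ ih =>
    obtain ⟨a, ha, has⟩ := ih
    obtain ⟨b, hb, hbi, hab⟩ := h a ha i
    exact ⟨b, hb, (Finset.forall_mem_insert _ _ _).2 ⟨hbi, fun j hj => hab j (has j hj)⟩⟩

variable {ι α : Type*} [Finite ι] [Preorder α] {S : Set (ι → α)}

lemma DirectedOn.exists_forall_le (hS : DirectedOn (· ≤ ·) S) (hne : S.Nonempty) {r : ι → α}
    (h : ∀ i, ∃ p ∈ S, r i ≤ p i) : ∃ p ∈ S, ∀ i, r i ≤ p i := by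
  obtain ⟨p, hp, hpr⟩ := exists_forall_of_improve (C := fun p i => r i ≤ p i) hne
    fun p hp i => by
      obtain ⟨q, hq, hqi⟩ := h i
      obtain ⟨s, hs, hps, hqs⟩ := hS p hp q hq
      exact ⟨s, hs, hqi.trans (hqs i), fun j hj => hj.trans (hps j)⟩
  exact ⟨p, hp, hpr⟩

lemma DirectedOn.exists_forall_ge (hS : DirectedOn (· ≥ ·) S) (hne : S.Nonempty) {r : ι → α}
    (h : ∀ i, ∃ p ∈ S, p i ≤ r i) : ∃ p ∈ S, ∀ i, p i ≤ r i := by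
  obtain ⟨p, hp, hpr⟩ := exists_forall_of_improve (C := fun p i => p i ≤ r i) hne
    fun p hp i => by
      obtain ⟨q, hq, hqi⟩ := h i
      obtain ⟨s, hs, hps, hqs⟩ := hS p hp q hq
      exact ⟨s, hs, (hqs i).trans hqi, fun j hj => (hps j).trans hj⟩
  exact ⟨p, hp, hpr⟩

end Approximation

section Lattices

variable {α : Type*} [Lattice α] [AddCommMonoid α] [IsOrderedAddMonoid α] {s t : Set α}

lemma SupClosed.directedOn_add (hs : SupClosed s) (ht : SupClosed t) :
    DirectedOn (· ≤ ·) (s + t) := by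
  rintro _ ⟨a, ha, b, hb, rfl⟩ _ ⟨c, hc, d, hd, rfl⟩
  exact ⟨(a ⊔ c) + (b ⊔ d), add_mem_add (hs ha hc) (ht hb hd),
    add_le_add le_sup_left le_sup_left, add_le_add le_sup_right le_sup_right⟩

lemma InfClosed.codirectedOn_add (hs : InfClosed s) (ht : InfClosed t) :
    DirectedOn (· ≥ ·) (s + t) := by
  rintro _ ⟨a, ha, b, hb, rfl⟩ _ ⟨c, hc, d, hd, rfl⟩
  exact ⟨(a ⊓ c) + (b ⊓ d), add_mem_add (hs ha hc) (ht hb hd),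
    add_le_add inf_le_left inf_le_left, add_le_add inf_le_right inf_le_right⟩

end Lattices

/-- Murota's translation submodularity, which characterizes L♮-convex sets. -/
def IsTranslationSubmodular {ι : Type*} (S : Set (ι → ℝ)) : Prop :=
  ∀ p ∈ S, ∀ q ∈ S, ∀ μ : ℝ, 0 ≤ μ → (p + fun _ => μ) ⊓ q ∈ S ∧ p ⊔ (q - fun _ => μ) ∈ S

namespace IsTranslationSubmodular

variable {ι : Type*} {S : Set (ι → ℝ)}

lemma supClosed (hS : IsTranslationSubmodular S) : SupClosed S :=
  fun p hp q hq => by simpa [← Pi.zero_def] using (hS p hp q hq 0 le_rfl).2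

lemma infClosed (hS : IsTranslationSubmodular S) : InfClosed S :=
  fun p hp q hq => by simpa [← Pi.zero_def] using (hS p hp q hq 0 le_rfl).1

/-- Translate the point with the larger `i`-th coordinate down to the other one, then join. -/
lemma exists_min_max_sub (hS : IsTranslationSubmodular S) {u v : ι → ℝ} (hu : u ∈ S) (hv : v ∈ S)
    (i : ι) : ∃ r ∈ S, r i = min (u i) (v i) ∧ ∀ t, max (u t - u i) (v t - v i) ≤ r t - r i := by
  wlog h : u i ≤ v i generalizing u v
  · obtain ⟨r, hr, hri, hrt⟩ := this hv hu (le_of_not_ge h)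
    exact ⟨r, hr, hri.trans (min_comm _ _), fun t => (max_comm _ _).trans_le (hrt t)⟩
  refine ⟨u ⊔ (v - fun _ => v i - u i), (hS u hu v hv _ (sub_nonneg.2 h)).2, by simp [h],
    fun t => ?_⟩
  simp only [Pi.sup_apply, Pi.sub_apply, sub_sub_cancel, max_self, max_le_iff]
  constructor <;>
    linarith [le_max_left (u t) (v t - (v i - u i)), le_max_right (u t) (v t - (v i - u i))]

lemma exists_le_add_forall_sub_le (hS : IsTranslationSubmodular S) [Finite ι] {y : ι → ℝ} {δ : ℝ}
    (hdiff : ∀ i t, ∃ v ∈ S, y t - y i - δ ≤ v t - v i) (hhigh : ∀ i, ∃ v ∈ S, v i ≤ y i + δ)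
    (i : ι) : ∃ u ∈ S, u i ≤ y i + δ ∧ ∀ t, y t - y i - δ ≤ u t - u i := by
  obtain ⟨u, ⟨hu, hui⟩, hut⟩ := exists_forall_of_improve
    (R := fun u => u ∈ S ∧ u i ≤ y i + δ) (C := fun u t => y t - y i - δ ≤ u t - u i)
    (by obtain ⟨v, hv, hvi⟩ := hhigh i; exact ⟨v, hv, hvi⟩) fun u ⟨hu, hui⟩ t => by
      obtain ⟨v, hv, hvt⟩ := hdiff i t
      obtain ⟨r, hr, hri, hrt⟩ := hS.exists_min_max_sub hu hv i
      exact ⟨r, ⟨hr, hri ▸ (min_le_left _ _).trans hui⟩,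
        hvt.trans ((le_max_right _ _).trans (hrt t)),
        fun s hs => hs.trans ((le_max_left _ _).trans (hrt s))⟩
  exact ⟨u, hu, hui, hut⟩

/-- The hypotheses say that `y` satisfies, up to every `δ > 0`, each inequality
`x i ≤ β`, `α ≤ x i`, `x t - x i ≤ γ` valid on `S`. -/
lemma mem_of_forall_approx (hS : IsTranslationSubmodular S) [Fintype ι] (hne : S.Nonempty)
    (hcl : IsClosed S) {y : ι → ℝ}
    (hdiff : ∀ δ > 0, ∀ i t, ∃ v ∈ S, y t - y i - δ ≤ v t - v i)
    (hlow : ∀ δ > 0, ∀ i, ∃ v ∈ S, y i - δ ≤ v i)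
    (hhigh : ∀ δ > 0, ∀ i, ∃ v ∈ S, v i ≤ y i + δ) : y ∈ S := by
  have approx : ∀ δ > 0, ∃ c ∈ S, ∀ t, y t - δ ≤ c t ∧ c t ≤ y t + δ := by
    intro δ hδ
    obtain ⟨z, hz, hzy⟩ := hS.supClosed.directedOn.exists_forall_le hne (hlow δ hδ)
    obtain ⟨c, ⟨hc, hcy⟩, hyc⟩ := exists_forall_of_improve
      (R := fun c => c ∈ S ∧ ∀ t, y t - δ ≤ c t) (C := fun c i => c i ≤ y i + δ)
      ⟨z, hz, hzy⟩ fun c ⟨hc, hcy⟩ i => by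
        obtain ⟨u, hu, hui, hut⟩ := hS.exists_le_add_forall_sub_le (hdiff δ hδ) (hhigh δ hδ) i
        -- raising `u` until its `i`-th coordinate is `y i + δ` lifts it above `y`
        refine ⟨(u + fun _ => y i + δ - u i) ⊓ c,
          ⟨(hS u hu c hc _ (by linarith)).1, fun t => le_inf ?_ (hcy t)⟩, ?_,
          fun j hj => inf_le_right.trans hj⟩
        · simp only [Pi.add_apply]
          linarith [hut t]
        · simp
    exact ⟨c, hc, fun t => ⟨hcy t, hyc t⟩⟩
  rw [← hcl.closure_eq, Metric.mem_closure_iff]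
  intro ε hε
  obtain ⟨c, hc, hcy⟩ := approx (ε / 2) (half_pos hε)
  refine ⟨c, hc, (dist_pi_lt_iff hε).2 fun t => ?_⟩
  rw [Real.dist_eq, abs_sub_lt_iff]
  constructor <;> linarith [hcy t]

end IsTranslationSubmodular

section LNatConvex

variable {n : ℕ}

lemma IsLNatConvexPoly.nonempty {S : Set (Fin n → ℝ)} (hS : IsLNatConvexPoly S) : S.Nonempty := by
  obtain ⟨-, Q, ⟨-, ⟨z, hz⟩, -, htr⟩, rfl⟩ := hS
  refine ⟨fun i => z i.castSucc - z (Fin.last n), ?_⟩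
  rw [mem_ofPred_eq]
  convert htr z hz (-z (Fin.last n)) using 1
  funext j
  refine Fin.lastCases ?_ (fun i => ?_) j <;> simp [sub_eq_add_neg]

lemma IsLNatConvexPoly.isTranslationSubmodular {S : Set (Fin n → ℝ)} (hS : IsLNatConvexPoly S) :
    IsTranslationSubmodular S := by
  obtain ⟨-, Q, ⟨-, -, hlat, htr⟩, rfl⟩ := hS
  intro p hp q hq μ hμ
  have hpμ := htr _ hp μ
  simp only [mem_ofPred_eq]
  constructor
  · convert (hlat _ hpμ _ hq).2 using 1
    funext j
    refine Fin.lastCases ?_ (fun i => ?_) j <;> simp [hμ]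
  · convert htr _ (hlat _ hpμ _ hq).1 (-μ) using 1
    funext j
    refine Fin.lastCases ?_ (fun i => ?_) j <;> simp [hμ, ← sub_eq_add_neg, ← max_sub_sub_right]

lemma IsLConvexPoly.isLNatConvexPoly_setOf_snoc_mem {Q : Set (Fin (n + 1) → ℝ)}
    (hQ : IsLConvexPoly Q) : IsLNatConvexPoly {x : Fin n → ℝ | Fin.snoc x (0 : ℝ) ∈ Q} := by
  let extendByZero : (Fin n → ℝ) →ₗ[ℝ] (Fin (n + 1) → ℝ) :=
    { toFun x := Fin.snoc x 0
      map_add' x y := by funext j; refine Fin.lastCases ?_ (fun i => ?_) j <;> simp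
      map_smul' c x := by funext j; refine Fin.lastCases ?_ (fun i => ?_) j <;> simp }
  exact ⟨hQ.1.preimage extendByZero, Q, hQ, rfl⟩

end LNatConvex

section DiffConstraints

section

variable {α : Type*} [AddCommGroup α] [LinearOrder α] [IsOrderedAddMonoid α]

lemma max_sub_max_mem_uIcc (a b c d : α) : max a b - max c d ∈ uIcc (a - c) (b - d) := by
  rw [mem_uIcc]
  grind

lemma min_sub_min_mem_uIcc (a b c d : α) : min a b - min c d ∈ uIcc (a - c) (b - d) := by
  rw [mem_uIcc]
  grind

end

lemma EReal.coe_mem_Icc_of_mem_uIcc {a b : EReal} {d₁ d₂ e : ℝ} (h₁ : (d₁ : EReal) ∈ Icc a b)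
    (h₂ : (d₂ : EReal) ∈ Icc a b) (he : e ∈ uIcc d₁ d₂) : (e : EReal) ∈ Icc a b :=
  ordConnected_Icc.uIcc_subset h₁ h₂
    (EReal.coe_strictMono.monotone.image_uIcc_subset (mem_image_of_mem _ he))

lemma EReal.exists_coe_mem_Icc {a b : EReal} (ha : a ≠ ⊤) (hb : b ≠ ⊥) (hab : a ≤ b) :
    ∃ r : ℝ, (r : EReal) ∈ Icc a b := by
  induction a using EReal.rec with
  | bot =>
    induction b using EReal.rec with
    | bot => exact absurd rfl hb
    | coe s => exact ⟨s, bot_le, le_rfl⟩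
    | top => exact ⟨0, bot_le, le_top⟩
  | coe r => exact ⟨r, le_rfl, hab⟩
  | top => exact absurd rfl ha

def diffConstraintSet {ι κ : Type*} (u v : ι → κ) (a b : ι → EReal) : Set (κ → ℝ) :=
  {z | ∀ i, ((z (u i) - z (v i) : ℝ) : EReal) ∈ Icc (a i) (b i)}

lemma isLConvexPoly_diffConstraintSet {ι : Type*} [Finite ι] {N : ℕ} (u v : ι → Fin N)
    (a b : ι → EReal) (hne : (diffConstraintSet u v a b).Nonempty) :
    IsLConvexPoly (diffConstraintSet u v a b) := by
  refine ⟨?_, hne, fun z hz w hw => ⟨fun i => ?_, fun i => ?_⟩, fun z hz μ i => ?_⟩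
  · exact isPolyhedron_setOf_forall_mem_Icc
      (fun i => LinearMap.proj (R := ℝ) (φ := fun _ => ℝ) (u i) - LinearMap.proj (v i)) a b
  · exact EReal.coe_mem_Icc_of_mem_uIcc (hz i) (hw i) (max_sub_max_mem_uIcc _ _ _ _)
  · exact EReal.coe_mem_Icc_of_mem_uIcc (hz i) (hw i) (min_sub_min_mem_uIcc _ _ _ _)
  · simpa using hz i

end DiffConstraints

section MatD

variable {n : ℕ}

lemma Fin.val_eq_zero_or_exists_val_eq_succ (i : Fin n) :
    (i : ℕ) = 0 ∨ ∃ j : Fin n, (i : ℕ) = j + 1 := by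
  rcases Nat.eq_zero_or_eq_succ_pred (i : ℕ) with h | h
  · exact Or.inl h
  · exact Or.inr ⟨⟨i - 1, by omega⟩, h⟩

lemma Fin.castSucc_sub_one_of_val_eq_zero {i : Fin n} (hi : (i : ℕ) = 0) :
    i.castSucc - 1 = Fin.last n := by
  rw [show i.castSucc = 0 from Fin.ext (by simpa using hi)]
  exact Fin.ext (by simp [Fin.coe_neg_one])

lemma Fin.castSucc_sub_one_of_val_eq_succ {i j : Fin n} (hij : (i : ℕ) = j + 1) :
    i.castSucc - 1 = j.castSucc := by
  have : i.castSucc ≠ 0 := fun h => by simpa [hij] using congrArg Fin.val h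
  exact Fin.ext (by rw [Fin.val_sub_one_of_ne_zero this]; simp [hij])

/-- In `Fin (n + 1)` we have `0 - 1 = last n`, so `Fin.snoc y 0 (i.castSucc - 1)` is `y (i - 1)`,
read as `0` when `i = 0`. -/
lemma matD_mulVec_apply (y : Fin n → ℝ) (i : Fin n) :
    (matD n *ᵥ y) i =
      (Fin.snoc y 0 : Fin (n + 1) → ℝ) i.castSucc -
        (Fin.snoc y 0 : Fin (n + 1) → ℝ) (i.castSucc - 1) := by
  simp only [mulVec, dotProduct, matD, of_apply, Fin.snoc_castSucc]
  rcases Fin.val_eq_zero_or_exists_val_eq_succ i with hi | ⟨j, hij⟩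
  · rw [Fin.castSucc_sub_one_of_val_eq_zero hi, Fin.snoc_last, Fintype.sum_eq_single i]
    · simp
    · intro k hk
      simp [Ne.symm hk, hi]
  · rw [Fin.castSucc_sub_one_of_val_eq_succ hij, Fin.snoc_castSucc, Fintype.sum_eq_add i j]
    · simp [Fin.ext_iff, hij]
      ring
    · rintro rfl
      omega
    · rintro k ⟨hki, hkj⟩
      have : (i : ℕ) ≠ k + 1 := fun h => hkj (Fin.ext (by omega))
      simp [Ne.symm hki, this]

def partialSums (x : Fin n → ℝ) : Fin n → ℝ := fun i => ∑ j ∈ Finset.Iic i, x j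

lemma partialSums_apply (x : Fin n → ℝ) (i : Fin n) :
    partialSums x i = x i + (Fin.snoc (partialSums x) 0 : Fin (n + 1) → ℝ) (i.castSucc - 1) := by
  rcases Fin.val_eq_zero_or_exists_val_eq_succ i with hi | ⟨j, hij⟩
  · rw [Fin.castSucc_sub_one_of_val_eq_zero hi, Fin.snoc_last, add_zero, partialSums,
      Finset.sum_eq_single_of_mem i (Finset.mem_Iic.2 le_rfl)]
    intro k hk hki
    rw [Finset.mem_Iic, Fin.le_iff_val_le_val, hi, Nat.le_zero] at hk
    exact (hki (Fin.ext (hk.trans hi.symm))).elim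
  · have : Finset.Iic i = insert i (Finset.Iic j) := by
      ext k
      simp only [Finset.mem_Iic, Finset.mem_insert, Fin.le_iff_val_le_val, Fin.ext_iff]
      omega
    rw [Fin.castSucc_sub_one_of_val_eq_succ hij, Fin.snoc_castSucc, partialSums, partialSums, this,
      Finset.sum_insert (by rw [Finset.mem_Iic, Fin.le_iff_val_le_val]; omega)]

lemma matD_mulVec_partialSums (x : Fin n → ℝ) : matD n *ᵥ partialSums x = x := by
  funext i
  rw [matD_mulVec_apply, Fin.snoc_castSucc, partialSums_apply, add_sub_cancel_right]

lemma matD_mulVec_surjective : Function.Surjective (matD n *ᵥ ·) :=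
  fun x => ⟨partialSums x, matD_mulVec_partialSums x⟩

lemma partialSums_matD_mulVec (y : Fin n → ℝ) : partialSums (matD n *ᵥ y) = y :=
  mulVec_injective_iff_isUnit.2 (mulVec_surjective_iff_isUnit.1 matD_mulVec_surjective)
    (matD_mulVec_partialSums _)

lemma partialSums_sub_partialSums (x : Fin n → ℝ) {i t : Fin n} (hit : i ≤ t) :
    partialSums x t - partialSums x i = ∑ j ∈ Finset.Iic t \ Finset.Iic i, x j :=
  (Finset.sum_sdiff_eq_sub (Finset.Iic_subset_Iic.2 hit)).symm

/-- `δ / (n + 1)` leaves room for the at most `n` terms of the sum. -/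
lemma sum_sub_le_sum_of_forall_sub_div_le {x p : Fin n → ℝ} {δ : ℝ} (hδ : 0 ≤ δ)
    (h : ∀ j, x j - δ / (n + 1) ≤ p j) (s : Finset (Fin n)) : ∑ j ∈ s, x j - δ ≤ ∑ j ∈ s, p j := by
  have hcard : (s.card : ℝ) ≤ n + 1 := by
    exact_mod_cast (s.card_le_univ.trans_eq (Fintype.card_fin n)).trans n.le_succ
  calc ∑ j ∈ s, x j - δ ≤ ∑ j ∈ s, x j - s.card * (δ / (n + 1)) := by
        gcongr
        rw [mul_div_assoc']
        exact div_le_of_le_mul₀ (by positivity) hδ (by nlinarith)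
    _ = ∑ j ∈ s, (x j - δ / (n + 1)) := by
        rw [Finset.sum_sub_distrib, Finset.sum_const, nsmul_eq_mul]
    _ ≤ ∑ j ∈ s, p j := Finset.sum_le_sum fun j _ => h j

end MatD

section Boxes

variable {n : ℕ}

def box (a b : Fin n → EReal) : Set (Fin n → ℝ) := {x | ∀ i, (x i : EReal) ∈ Icc (a i) (b i)}

variable {a b : Fin n → EReal}

lemma isLNatConvexPoly_box (ha : ∀ i, a i ≠ ⊤) (hb : ∀ i, b i ≠ ⊥) (hab : ∀ i, a i ≤ b i) :
    IsLNatConvexPoly (box a b) := by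
  have : box a b =
      {x | Fin.snoc x 0 ∈ diffConstraintSet Fin.castSucc (fun _ => Fin.last n) a b} := by
    ext x
    simp [box, diffConstraintSet]
  rw [this]
  refine (isLConvexPoly_diffConstraintSet _ _ a b ?_).isLNatConvexPoly_setOf_snoc_mem
  choose r hr using fun i => EReal.exists_coe_mem_Icc (ha i) (hb i) (hab i)
  exact ⟨Fin.snoc r 0, by simpa [diffConstraintSet] using hr⟩

lemma isLNatConvexPoly_preimage_box (ha : ∀ i, a i ≠ ⊤) (hb : ∀ i, b i ≠ ⊥)
    (hab : ∀ i, a i ≤ b i) : IsLNatConvexPoly ((matD n *ᵥ ·) ⁻¹' box a b) := by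
  have : (matD n *ᵥ ·) ⁻¹' box a b =
      {y | Fin.snoc y 0 ∈ diffConstraintSet Fin.castSucc (fun i => i.castSucc - 1) a b} := by
    ext y
    simp only [box, diffConstraintSet, mem_preimage, mem_ofPred_eq, matD_mulVec_apply]
  rw [this]
  refine (isLConvexPoly_diffConstraintSet _ _ a b ?_).isLNatConvexPoly_setOf_snoc_mem
  choose r hr using fun i => EReal.exists_coe_mem_Icc (ha i) (hb i) (hab i)
  refine ⟨Fin.snoc (partialSums r) 0, fun i => ?_⟩
  have := matD_mulVec_apply (partialSums r) i
  rw [matD_mulVec_partialSums] at this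
  exact this ▸ hr i

lemma isMultimodularPoly_box (ha : ∀ i, a i ≠ ⊤) (hb : ∀ i, b i ≠ ⊥) (hab : ∀ i, a i ≤ b i) :
    IsMultimodularPoly (box a b) :=
  ⟨_, isLNatConvexPoly_preimage_box ha hb hab, (image_preimage_eq _ matD_mulVec_surjective).symm⟩

lemma isLNatConvexPoly_zero : IsLNatConvexPoly (0 : Set (Fin n → ℝ)) := by
  have : (0 : Set (Fin n → ℝ)) = box 0 0 := by
    ext x
    simp [box, le_antisymm_iff, Pi.le_def, forall_and]
  exact this ▸ isLNatConvexPoly_box (fun _ => EReal.zero_ne_top) (fun _ => EReal.zero_ne_bot)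
    fun _ => le_rfl

lemma IsLNatConvexPoly.isL2NatConvexPoly {S : Set (Fin n → ℝ)} (hS : IsLNatConvexPoly S) :
    IsL2NatConvexPoly S :=
  ⟨hS.1, S, 0, hS, isLNatConvexPoly_zero, (add_zero S).symm⟩

end Boxes

section Converse

variable {n : ℕ} {P : Set (Fin n → ℝ)}

lemma isRealBox_of_forall_approx (hne : P.Nonempty)
    (h : ∀ x : Fin n → ℝ, (∀ t, ∀ ε > 0, ∃ p ∈ P, x t - ε ≤ p t) →
      (∀ t, ∀ ε > 0, ∃ p ∈ P, p t ≤ x t + ε) → x ∈ P) : IsRealBox P := by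
  obtain ⟨p₀, hp₀⟩ := hne
  have hinf (t) {x} (hx : x ∈ P) : ⨅ p ∈ P, (p t : EReal) ≤ x t := iInf₂_le x hx
  have hsup (t) {x} (hx : x ∈ P) : (x t : EReal) ≤ ⨆ p ∈ P, (p t : EReal) :=
    le_iSup₂ (f := fun p _ => (p t : EReal)) x hx
  refine ⟨fun t => ⨅ p ∈ P, (p t : EReal), fun t => ⨆ p ∈ P, (p t : EReal),
    fun t => ne_top_of_le_ne_top (EReal.coe_ne_top _) (hinf t hp₀),
    fun t => ne_bot_of_le_ne_bot (EReal.coe_ne_bot _) (hsup t hp₀),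
    fun t => (hinf t hp₀).trans (hsup t hp₀), ?_⟩
  ext x
  refine ⟨fun hx t => ⟨hinf t hx, hsup t hx⟩, fun hx => h x (fun t ε hε => ?_) (fun t ε hε => ?_)⟩
  · obtain ⟨p, hp, hpt⟩ :=
      lt_biSup_iff.1 ((EReal.coe_lt_coe_iff.2 (sub_lt_self _ hε)).trans_le (hx t).2)
    exact ⟨p, hp, (EReal.coe_lt_coe_iff.1 hpt).le⟩
  · obtain ⟨p, hp, hpt⟩ :=
      lt_biInf_iff.1 ((hx t).1.trans_lt (EReal.coe_lt_coe_iff.2 (lt_add_of_pos_right _ hε)))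
    exact ⟨p, hp, (EReal.coe_lt_coe_iff.1 hpt).le⟩

lemma IsMultimodularPoly.mem_of_forall_approx (hP : IsMultimodularPoly P) {x : Fin n → ℝ}
    (hlow : ∀ ε > 0, ∃ p ∈ P, ∀ t, x t - ε ≤ p t)
    (hhigh : ∀ ε > 0, ∃ p ∈ P, ∀ t, p t ≤ x t + ε) : x ∈ P := by
  obtain ⟨Q, hQ, rfl⟩ := hP
  have hsums : ∀ p ∈ (matD n *ᵥ ·) '' Q, partialSums p ∈ Q := by
    rintro _ ⟨q, hq, rfl⟩
    rwa [partialSums_matD_mulVec]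
  have hε (δ : ℝ) (hδ : 0 < δ) : 0 < δ / (n + 1) := by positivity
  refine ⟨partialSums x, hQ.isTranslationSubmodular.mem_of_forall_approx hQ.nonempty hQ.1.isClosed
    (fun δ hδ i t => ?_) (fun δ hδ i => ?_) (fun δ hδ i => ?_), matD_mulVec_partialSums x⟩
  · rcases le_total i t with hit | hti
    · obtain ⟨p, hp, hpx⟩ := hlow _ (hε δ hδ)
      refine ⟨_, hsums p hp, ?_⟩
      have := sum_sub_le_sum_of_forall_sub_div_le hδ.le hpx (Finset.Iic t \ Finset.Iic i)
      rw [← partialSums_sub_partialSums _ hit, ← partialSums_sub_partialSums _ hit] at this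
      linarith
    · obtain ⟨p, hp, hpx⟩ := hhigh _ (hε δ hδ)
      refine ⟨_, hsums p hp, ?_⟩
      have := sum_sub_le_sum_of_forall_sub_div_le hδ.le (fun j => sub_le_iff_le_add.2 (hpx j))
        (Finset.Iic i \ Finset.Iic t)
      rw [← partialSums_sub_partialSums _ hti, ← partialSums_sub_partialSums _ hti] at this
      linarith
  · obtain ⟨p, hp, hpx⟩ := hlow _ (hε δ hδ)
    exact ⟨_, hsums p hp, sum_sub_le_sum_of_forall_sub_div_le hδ.le hpx (Finset.Iic i)⟩
  · obtain ⟨p, hp, hpx⟩ := hhigh _ (hε δ hδ)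
    exact ⟨_, hsums p hp, sub_le_iff_le_add.1
      (sum_sub_le_sum_of_forall_sub_div_le hδ.le (fun j => sub_le_iff_le_add.2 (hpx j))
        (Finset.Iic i))⟩

lemma IsL2NatConvexPoly.isRealBox_of_isMultimodularPoly (h : IsL2NatConvexPoly P)
    (hM : IsMultimodularPoly P) : IsRealBox P := by
  obtain ⟨-, P₁, P₂, h₁, h₂, rfl⟩ := h
  have hne := h₁.nonempty.add h₂.nonempty
  have hup := h₁.isTranslationSubmodular.supClosed.directedOn_add
    h₂.isTranslationSubmodular.supClosed
  have hdown := h₁.isTranslationSubmodular.infClosed.codirectedOn_add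
    h₂.isTranslationSubmodular.infClosed
  exact isRealBox_of_forall_approx hne fun x hlow hhigh => hM.mem_of_forall_approx
    (fun ε hε => hup.exists_forall_le hne fun t => hlow t ε hε)
    (fun ε hε => hdown.exists_forall_ge hne fun t => hhigh t ε hε)

end Converse

/-- A polyhedron is a box of reals iff it is both L₂♮-convex and
multimodular. -/
theorem realBox_iff_L2nat_and_multimodular_poly {n : ℕ} (P : Set (Fin n → ℝ)) :
    IsRealBox P ↔ IsL2NatConvexPoly P ∧ IsMultimodularPoly P := by
  constructor
  · rintro ⟨a, b, ha, hb, hab, rfl⟩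
    exact ⟨(isLNatConvexPoly_box ha hb hab).isL2NatConvexPoly, isMultimodularPoly_box ha hb hab⟩
  · rintro ⟨hL, hM⟩
    exact hL.isRealBox_of_isMultimodularPoly hM
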